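/- Let k be a field of characteristic zero, A a k-algebra, and s ∈ A a regular element (not a zero divisor on either side) such that sA = As, A is complete and separated for the s-adic topology (A ≅ lim A/As^n), and A/As is left Noetherian. Then A is left Noetherian. -/

import Mathlib

/-!
For a left ideal `I` of `A`, the sets `Lₙ = {d | sⁿ d ∈ I}` increase with `n`, so their images
in the left Noetherian ring `B` stabilize at some `N`, and finitely many elements of
`L₀, …, L_N` generate all of them modulo `As`. Their products with the matching powers `sⁿ`
lie in `I` and generate it: since `sA = As`, every `y ∈ I ∩ Asᵐ` agrees modulo `Asᵐ⁺¹` with a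
combination of these generators whose coefficients lie in `As^(m-N)`. Iterating, the
coefficients converge by completeness, and separatedness turns the approximation into an
equality.
-/

open Finset

section Monoid

variable {M : Type*} [Monoid M] {s : M}

theorem exists_pow_mul_eq_mul_pow (hs : ∀ a, ∃ b, s * a = b * s) (n : ℕ) (a : M) :
    ∃ b, s ^ n * a = b * s ^ n := by
  induction n generalizing a with
  | zero => exact ⟨a, by simp⟩
  | succ n ih =>
    obtain ⟨b, hb⟩ := hs a
    obtain ⟨c, hc⟩ := ih b
    exact ⟨c, by rw [pow_succ, mul_assoc, hb, ← mul_assoc, hc, mul_assoc, ← pow_succ]⟩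

theorem exists_mul_pow_eq_pow_mul (hs : ∀ a, ∃ b, a * s = s * b) (n : ℕ) (a : M) :
    ∃ b, a * s ^ n = s ^ n * b := by
  induction n generalizing a with
  | zero => exact ⟨a, by simp⟩
  | succ n ih =>
    obtain ⟨b, hb⟩ := hs a
    obtain ⟨c, hc⟩ := ih b
    exact ⟨c, by rw [pow_succ', ← mul_assoc, hb, mul_assoc, hc, ← mul_assoc, ← pow_succ']⟩

end Monoid

section Semiring

variable {A : Type*} [Semiring A] {s : A}

theorem mem_span_pow_iff {n : ℕ} {x : A} : x ∈ Ideal.span {s ^ n} ↔ ∃ b, x = b * s ^ n :=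
  Ideal.mem_span_singleton'.trans <| exists_congr fun _ => eq_comm

theorem span_pow_antitone (s : A) : Antitone fun n : ℕ => Ideal.span {s ^ n} :=
  antitone_nat_of_succ_le fun n => Ideal.span_le.2 <| Set.singleton_subset_iff.2 <| by
    rw [pow_succ']
    exact Ideal.mul_mem_left _ s (Ideal.mem_span_singleton_self _)

theorem pow_mul_mem_span_pow (hs : ∀ a : A, ∃ b, s * a = b * s) (n : ℕ) (a : A) :
    s ^ n * a ∈ Ideal.span {s ^ n} := by
  obtain ⟨b, hb⟩ := exists_pow_mul_eq_mul_pow hs n a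
  exact hb ▸ Ideal.mul_mem_left _ b (Ideal.mem_span_singleton_self _)

theorem mul_mem_span_pow (hs : ∀ a : A, ∃ b, s * a = b * s) {n : ℕ} {x : A}
    (hx : x ∈ Ideal.span {s ^ n}) (a : A) : x * a ∈ Ideal.span {s ^ n} := by
  obtain ⟨b, rfl⟩ := mem_span_pow_iff.1 hx
  rw [mul_assoc]
  exact Ideal.mul_mem_left _ b (pow_mul_mem_span_pow hs n a)

theorem pow_mul_mem_span_pow_add (hs : ∀ a : A, ∃ b, s * a = b * s) (p : ℕ) {q : ℕ} {x : A}
    (hx : x ∈ Ideal.span {s ^ q}) : s ^ p * x ∈ Ideal.span {s ^ (p + q)} := by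
  obtain ⟨b, rfl⟩ := mem_span_pow_iff.1 hx
  obtain ⟨c, hc⟩ := exists_pow_mul_eq_mul_pow hs p b
  rw [← mul_assoc, hc, mul_assoc, ← pow_add]
  exact Ideal.mul_mem_left _ c (Ideal.mem_span_singleton_self _)

theorem pow_mul_mem_span_image (hs : ∀ a : A, ∃ b, s * a = b * s) (n : ℕ) {T : Set A} {x : A}
    (hx : x ∈ Ideal.span T) : s ^ n * x ∈ Ideal.span ((s ^ n * ·) '' T) := by
  induction hx using Submodule.span_induction with
  | mem x hx => exact Ideal.subset_span (Set.mem_image_of_mem _ hx)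
  | zero => simp
  | add x y _ _ hx hy => rw [mul_add]; exact add_mem hx hy
  | smul a x _ hx =>
    obtain ⟨b, hb⟩ := exists_pow_mul_eq_mul_pow hs n a
    rw [smul_eq_mul, ← mul_assoc, hb, mul_assoc]
    exact Ideal.mul_mem_left _ b hx

theorem monotone_preimage_pow_mul (s : A) (I : Ideal A) :
    Monotone fun n : ℕ => (s ^ n * ·) ⁻¹' (I : Set A) :=
  monotone_nat_of_le_succ fun n d hd => by
    simpa only [Set.mem_preimage, SetLike.mem_coe, pow_succ', mul_assoc] using I.mul_mem_left s hd

end Semiring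

section Ring

variable {A : Type*} [Ring A] {s : A}

theorem exists_sub_pow_mul_mem_span_pow_succ (hs : ∀ a : A, ∃ b, s * a = b * s) {T : Set A}
    {K : Ideal A} (hK : K ≤ Ideal.span {s}) {m n : ℕ} (hnm : n ≤ m) {d : A}
    (hd : d ∈ Ideal.span T ⊔ K) :
    ∃ z ∈ Ideal.span ((s ^ n * ·) '' T),
      s ^ m * d - s ^ (m - n) * z ∈ Ideal.span {s ^ (m + 1)} := by
  obtain ⟨u, hu, k, hk, rfl⟩ := Submodule.mem_sup.1 hd
  refine ⟨s ^ n * u, pow_mul_mem_span_image hs n hu, ?_⟩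
  rw [← mul_assoc, ← pow_add, Nat.sub_add_cancel hnm, mul_add, add_sub_cancel_left]
  exact pow_mul_mem_span_pow_add hs m (by simpa using hK hk)

theorem exists_sub_mem_span_pow_sub
    (hcomplete : ∀ f : ℕ → A, (∀ n, f (n + 1) - f n ∈ Ideal.span {s ^ n}) →
      ∃ a, ∀ n, a - f n ∈ Ideal.span {s ^ n})
    (N : ℕ) {f : ℕ → A} (hf : ∀ n, f (n + 1) - f n ∈ Ideal.span {s ^ (n - N)}) :
    ∃ a, ∀ n, a - f n ∈ Ideal.span {s ^ (n - N)} := by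
  obtain ⟨a, ha⟩ := hcomplete (fun n => f (n + N)) fun n => by
    simpa [Nat.add_right_comm] using hf (n + N)
  refine ⟨a, fun n => ?_⟩
  rcases le_or_gt N n with h | h
  · obtain ⟨k, rfl⟩ := Nat.exists_eq_add_of_le' h
    simpa using ha k
  · simp [Nat.sub_eq_zero_of_le h.le]

theorem mem_span_of_sub_sum_mem_span_pow (hs : ∀ a : A, ∃ b, s * a = b * s)
    (hsep : ∀ a : A, (∀ n, a ∈ Ideal.span {s ^ n}) → a = 0)
    (hcomplete : ∀ f : ℕ → A, (∀ n, f (n + 1) - f n ∈ Ideal.span {s ^ n}) →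
      ∃ a, ∀ n, a - f n ∈ Ideal.span {s ^ n})
    {G : Finset A} {N : ℕ} {y : A} (Q : ℕ → A → A)
    (hQ : ∀ m g, Q (m + 1) g - Q m g ∈ Ideal.span {s ^ (m - N)})
    (hy : ∀ m, y - ∑ g ∈ G, Q m g * g ∈ Ideal.span {s ^ m}) : y ∈ Ideal.span G := by
  choose C hC using fun g => exists_sub_mem_span_pow_sub hcomplete N (f := (Q · g)) (hQ · g)
  have hC_mem : ∀ m, y - ∑ g ∈ G, C g * g ∈ Ideal.span {s ^ (m - N)} := fun m => by
    have : y - ∑ g ∈ G, C g * g =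
        (y - ∑ g ∈ G, Q m g * g) - ∑ g ∈ G, (C g - Q m g) * g := by
      simp only [sub_mul, sum_sub_distrib]
      abel
    rw [this]
    exact sub_mem (span_pow_antitone s (Nat.sub_le m N) (hy m))
      (sum_mem fun g _ => mul_mem_span_pow hs (hC g m) g)
  have hy_eq : y = ∑ g ∈ G, C g * g :=
    sub_eq_zero.1 <| hsep _ fun n => by simpa using hC_mem (n + N)
  rw [hy_eq]
  exact sum_mem fun g hg => Ideal.mul_mem_left _ _ (Ideal.subset_span hg)

theorem eq_span_of_forall_exists_sub_pow_mul_mem (hs : ∀ a : A, ∃ b, s * a = b * s)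
    (hsep : ∀ a : A, (∀ n, a ∈ Ideal.span {s ^ n}) → a = 0)
    (hcomplete : ∀ f : ℕ → A, (∀ n, f (n + 1) - f n ∈ Ideal.span {s ^ n}) →
      ∃ a, ∀ n, a - f n ∈ Ideal.span {s ^ n})
    {I : Ideal A} {G : Finset A} (hG : ↑G ⊆ (I : Set A)) (N : ℕ)
    (happrox : ∀ m, ∀ y ∈ I ⊓ Ideal.span {s ^ m}, ∃ z ∈ Ideal.span (G : Set A),
      y - s ^ (m - N) * z ∈ Ideal.span {s ^ (m + 1)}) :
    I = Ideal.span G := by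
  classical
  refine le_antisymm (fun y hy => ?_) (Ideal.span_le.2 hG)
  have step : ∀ m (w : A), ∃ c : A → A, w ∈ I ⊓ Ideal.span {s ^ m} →
      (∀ g, c g ∈ Ideal.span {s ^ (m - N)}) ∧
        w - ∑ g ∈ G, c g * g ∈ Ideal.span {s ^ (m + 1)} := by
    intro m w
    by_cases hw : w ∈ I ⊓ Ideal.span {s ^ m}
    · obtain ⟨z, hz, hwz⟩ := happrox m w hw
      obtain ⟨f, -, rfl⟩ := Submodule.mem_span_finset.1 hz
      refine ⟨fun g => s ^ (m - N) * f g,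
        fun _ => ⟨fun g => pow_mul_mem_span_pow hs _ _, ?_⟩⟩
      simpa [mul_sum, mul_assoc] using hwz
    · exact ⟨0, fun h => absurd h hw⟩
  choose c hc using step
  let Q : ℕ → A → A := fun m => Nat.rec 0 (fun m q => q + c m (y - ∑ g ∈ G, q g * g)) m
  have hQ : ∀ m, y - ∑ g ∈ G, Q m g * g ∈ I ⊓ Ideal.span {s ^ m} := by
    intro m
    induction m with
    | zero => simpa [Q] using hy
    | succ m ih =>
      have : y - ∑ g ∈ G, Q (m + 1) g * g =
          (y - ∑ g ∈ G, Q m g * g) - ∑ g ∈ G, c m (y - ∑ g ∈ G, Q m g * g) g * g := by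
        simp only [Q, Pi.add_apply, add_mul, sum_add_distrib]
        abel
      rw [this]
      exact ⟨sub_mem ih.1 (sum_mem fun g hg => I.mul_mem_left _ (hG hg)), (hc m _ ih).2⟩
  exact mem_span_of_sub_sum_mem_span_pow hs hsep hcomplete Q
    (fun m g => by simpa [Q] using (hc m _ (hQ m)).1 g) fun m => (hQ m).2

end Ring

section Quotient

variable {A B : Type*} [Ring A] [Ring B] {π : A →+* B}

theorem mem_span_sup_ker_of_map_mem_span (hπ : Function.Surjective π) {T : Set A} {d : A}
    (hd : π d ∈ Ideal.span (π '' T)) : d ∈ Ideal.span T ⊔ RingHom.ker π := by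
  rw [← Ideal.map_span] at hd
  rw [RingHom.ker, ← Ideal.comap_map_of_surjective π hπ]
  exact hd

theorem exists_finset_subset_span_sup_ker [IsNoetherianRing B] (hπ : Function.Surjective π)
    (L : Set A) :
    ∃ S : Finset A, ↑S ⊆ L ∧ L ⊆ ↑(Ideal.span ↑S ⊔ RingHom.ker π) := by
  classical
  obtain ⟨T, hTL, hT⟩ :=
    (Submodule.fg_span_iff_fg_span_finset_subset (π '' L)).1 (IsNoetherian.noetherian (R := B) _)
  obtain ⟨S, hSL, rfl⟩ := Finset.subset_set_image_iff.1 hTL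
  refine ⟨S, hSL, fun d hd => mem_span_sup_ker_of_map_mem_span hπ ?_⟩
  rw [← Finset.coe_image, ← Ideal.submodule_span_eq, ← hT]
  exact Submodule.subset_span ⟨d, hd, rfl⟩

theorem exists_finset_subset_span_sup_ker_of_monotone [IsNoetherianRing B]
    (hπ : Function.Surjective π) {L : ℕ → Set A} (hL : Monotone L) :
    ∃ (N : ℕ) (S : ℕ → Finset A), (∀ n, ↑(S n) ⊆ L n) ∧
      ∀ m, L m ⊆ ↑(Ideal.span ↑(S (min m N)) ⊔ RingHom.ker π) := by
  obtain ⟨N, hN⟩ := monotone_stabilizes_iff_noetherian.2 inferInstance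
    ⟨fun n => Ideal.span (π '' L n), fun m n h => Ideal.span_mono (Set.image_mono (hL h))⟩
  choose S hSL hLS using fun n => exists_finset_subset_span_sup_ker hπ (L n)
  refine ⟨N, S, hSL, fun m d hd => ?_⟩
  rcases le_total m N with h | h
  · rw [min_eq_left h]
    exact hLS m hd
  · rw [min_eq_right h]
    have hdN : π d ∈ Ideal.span (π '' L N) := by
      rw [show Ideal.span (π '' L N) = Ideal.span (π '' L m) from hN m h]
      exact Ideal.subset_span ⟨d, hd, rfl⟩
    exact sup_le (Ideal.span_le.2 (hLS N)) le_sup_right (mem_span_sup_ker_of_map_mem_span hπ hdN)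

end Quotient

theorem noetherian_of_sAdically_complete_general
    {A : Type*} [Ring A] (s : A)
    (hsA : ∀ a : A, ∃ b : A, s * a = b * s)
    (hAs : ∀ a : A, ∃ b : A, a * s = s * b)
    (hsep : ∀ a : A, (∀ n : ℕ, ∃ b : A, a = b * s ^ n) → a = 0)
    (hcomplete : ∀ f : ℕ → A, (∀ n : ℕ, ∃ b : A, f (n + 1) - f n = b * s ^ n) →
      ∃ a : A, ∀ n : ℕ, ∃ b : A, a - f n = b * s ^ n)
    {B : Type*} [Ring B] (π : A →+* B) (hπ : Function.Surjective π)
    (hker : ∀ x : A, π x = 0 ↔ ∃ a : A, x = a * s)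
    [IsNoetherianRing B] :
    IsNoetherianRing A := by
  classical
  have hsep' : ∀ a : A, (∀ n, a ∈ Ideal.span {s ^ n}) → a = 0 :=
    fun a ha => hsep a fun n => mem_span_pow_iff.1 (ha n)
  have hcomplete' : ∀ f : ℕ → A, (∀ n, f (n + 1) - f n ∈ Ideal.span {s ^ n}) →
      ∃ a, ∀ n, a - f n ∈ Ideal.span {s ^ n} := fun f hf =>
    (hcomplete f fun n => mem_span_pow_iff.1 (hf n)).imp fun _ ha n => mem_span_pow_iff.2 (ha n)
  refine ⟨fun I => ?_⟩
  obtain ⟨N, S, hSL, hLS⟩ :=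
    exists_finset_subset_span_sup_ker_of_monotone hπ (monotone_preimage_pow_mul s I)
  let G := (range (N + 1)).biUnion fun n => (S n).image (s ^ n * ·)
  have hSG : ∀ n ≤ N, (s ^ n * ·) '' ↑(S n) ⊆ ↑G := fun n hn => by
    rw [← coe_image]
    exact coe_subset.2 (subset_biUnion_of_mem (fun n => (S n).image (s ^ n * ·))
      (mem_range.2 (Nat.lt_succ_of_le hn)))
  have hGI : ↑G ⊆ (I : Set A) := by
    simp only [G, coe_biUnion, coe_image, Set.iUnion_subset_iff, Set.image_subset_iff]
    exact fun n _ => hSL n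
  have hK : RingHom.ker π ≤ Ideal.span {s} := fun k hk =>
    Ideal.mem_span_singleton'.2 (((hker k).1 hk).imp fun _ => Eq.symm)
  refine ⟨G, (eq_span_of_forall_exists_sub_pow_mul_mem hsA hsep' hcomplete' hGI N
    fun m y hy => ?_).symm⟩
  obtain ⟨b, rfl⟩ := mem_span_pow_iff.1 hy.2
  obtain ⟨d, hd⟩ := exists_mul_pow_eq_pow_mul hAs m b
  rw [hd] at hy ⊢
  obtain ⟨z, hz, hdz⟩ :=
    exists_sub_pow_mul_mem_span_pow_succ hsA hK (min_le_left m N) (hLS m hy.1)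
  rw [← Nat.sub_eq_sub_min] at hdz
  exact ⟨z, Ideal.span_mono (hSG _ (min_le_right m N)) hz, hdz⟩

/-- Let `k` be a field of characteristic zero, `A` a `k`-algebra and `s ∈ A` a regular
element with `sA = As`, such that `A` is separated and complete for the `s`-adic topology
(`A ≅ lim A/As^n`) and `A/As` is left Noetherian (realized here by a surjective ring
homomorphism `π : A → B` with kernel `As` onto a left Noetherian ring `B`).  Then `A` is
left Noetherian. -/
theorem noetherian_of_sAdically_complete
    {k : Type*} [Field k] [CharZero k]
    {A : Type*} [Ring A] [Algebra k A] (s : A)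
    (hregl : ∀ a : A, s * a = 0 → a = 0)
    (hregr : ∀ a : A, a * s = 0 → a = 0)
    (hsA : ∀ a : A, ∃ b : A, s * a = b * s)
    (hAs : ∀ a : A, ∃ b : A, a * s = s * b)
    (hsep : ∀ a : A, (∀ n : ℕ, ∃ b : A, a = b * s ^ n) → a = 0)
    (hcomplete : ∀ f : ℕ → A, (∀ n : ℕ, ∃ b : A, f (n + 1) - f n = b * s ^ n) →
      ∃ a : A, ∀ n : ℕ, ∃ b : A, a - f n = b * s ^ n)
    {B : Type*} [Ring B] (π : A →+* B) (hπ : Function.Surjective π)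
    (hker : ∀ x : A, π x = 0 ↔ ∃ a : A, x = a * s)
    [IsNoetherianRing B] :
    IsNoetherianRing A :=
  noetherian_of_sAdically_complete_general s hsA hAs hsep hcomplete π hπ hker
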